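/- The convolution of two nonnegative, spherically symmetric, radially non-increasing, square-integrable functions on ℝ^k is again a spherically symmetric, radially non-increasing function. Specifically: if ψ₁(x) = g₁(|x|) and ψ₂(x) = g₂(|x|) with g₁, g₂ nonnegative and non-increasing, and ψ₁, ψ₂ ∈ L²(ℝ^k), then (ψ₁ * ψ₂)(x) depends only on |x| and is a non-increasing function of |x|. -/

import Mathlib

/-!
A reflection of `ℝ^k` taking `x` to any `x'` of the same norm preserves Lebesgue measure and both
radial profiles, so the convolution `c = ψ₁ * ψ₂` is radial. For `0 ≤ d₁ ≤ d₂` and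
`z = (d₁ + d₂) • e`, the substitution `y ↦ z - y` gives
`c (d₁ • e) = ∫ ψ₁(z - y) ψ₂(d₂ • e - y) dy` and `c (d₂ • e) = ∫ ψ₁(z - y) ψ₂(d₁ • e - y) dy`.
On either side of the hyperplane bisecting `0` and `z`, the pairs `(ψ₁(y), ψ₁(z - y))` and
`(ψ₂(d₁ • e - y), ψ₂(d₂ • e - y))` are ordered the same way, so the rearrangement inequality
`a b' + a' b ≤ a b + a' b'` integrates to `2 c (d₂ • e) ≤ 2 c (d₁ • e)`.
-/

open MeasureTheory Set
open scoped RealInnerProductSpace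

section Geometry

variable {E : Type*} [NormedAddCommGroup E] [InnerProductSpace ℝ E]

theorem norm_smul_sub_sq (d : ℝ) (e y : E) :
    ‖d • e - y‖ ^ 2 = d ^ 2 * ‖e‖ ^ 2 - 2 * d * ⟪e, y⟫ + ‖y‖ ^ 2 := by
  rw [norm_sub_sq_real, real_inner_smul_left, norm_smul, Real.norm_eq_abs, mul_pow, sq_abs]
  ring

/-- Both differences of squared norms are nonnegative multiples of `(d₁ + d₂) ‖e‖² - 2 ⟪e, y⟫`. -/
theorem norm_smul_sub_le_and_or_ge {d₁ d₂ : ℝ} (hd₁ : 0 ≤ d₁) (hd : d₁ ≤ d₂) (e y : E) :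
    (‖y‖ ≤ ‖(d₁ + d₂) • e - y‖ ∧ ‖d₁ • e - y‖ ≤ ‖d₂ • e - y‖) ∨
      (‖(d₁ + d₂) • e - y‖ ≤ ‖y‖ ∧ ‖d₂ • e - y‖ ≤ ‖d₁ • e - y‖) := by
  have h₁ := norm_smul_sub_sq (d₁ + d₂) e y
  have h₂ := norm_smul_sub_sq d₁ e y
  have h₃ := norm_smul_sub_sq d₂ e y
  simp only [← sq_le_sq₀ (norm_nonneg _) (norm_nonneg _)]
  rcases le_total (2 * ⟪e, y⟫) ((d₁ + d₂) * ‖e‖ ^ 2) with h | h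
  · left; constructor <;> nlinarith
  · right; constructor <;> nlinarith

end Geometry

theorem AntitoneOn.mul_add_mul_le_mul_add_mul {g₁ g₂ : ℝ → ℝ} (h₁ : AntitoneOn g₁ (Ici 0))
    (h₂ : AntitoneOn g₂ (Ici 0)) {r₁ r₁' r₂ r₂' : ℝ} (hr₁ : 0 ≤ r₁) (hr₁' : 0 ≤ r₁')
    (hr₂ : 0 ≤ r₂) (hr₂' : 0 ≤ r₂')
    (h : (r₁ ≤ r₁' ∧ r₂ ≤ r₂') ∨ (r₁' ≤ r₁ ∧ r₂' ≤ r₂)) :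
    g₁ r₁ * g₂ r₂' + g₁ r₁' * g₂ r₂ ≤ g₁ r₁ * g₂ r₂ + g₁ r₁' * g₂ r₂' := by
  suffices 0 ≤ (g₁ r₁ - g₁ r₁') * (g₂ r₂ - g₂ r₂') by linarith
  rcases h with ⟨h₁', h₂'⟩ | ⟨h₁', h₂'⟩
  · exact mul_nonneg (sub_nonneg.2 (h₁ hr₁ hr₁' h₁')) (sub_nonneg.2 (h₂ hr₂ hr₂' h₂'))
  · exact mul_nonneg_of_nonpos_of_nonpos (sub_nonpos.2 (h₁ hr₁' hr₁ h₁'))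
      (sub_nonpos.2 (h₂ hr₂' hr₂ h₂'))

theorem MeasureTheory.MemLp.comp_sub_left {G F : Type*} [MeasurableSpace G] [AddGroup G]
    [MeasurableAdd G] [MeasurableNeg G] [NormedAddCommGroup F] {μ : Measure G}
    [μ.IsAddLeftInvariant] [μ.IsNegInvariant] {f : G → F} {p : ENNReal} (hf : MemLp f p μ)
    (z : G) : MemLp (fun y => f (z - y)) p μ :=
  hf.comp_measurePreserving (Measure.measurePreserving_sub_left μ z)

section RadialConv

variable {E : Type*} [NormedAddCommGroup E] [InnerProductSpace ℝ E] [FiniteDimensional ℝ E]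
  [MeasurableSpace E] [BorelSpace E] {g₁ g₂ : ℝ → ℝ}

noncomputable def radialConv (g₁ g₂ : ℝ → ℝ) (x : E) : ℝ :=
  ∫ y, g₁ ‖y‖ * g₂ ‖x - y‖

theorem radialConv_eq_of_norm_eq (g₁ g₂ : ℝ → ℝ) {x x' : E} (h : ‖x‖ = ‖x'‖) :
    radialConv g₁ g₂ x = radialConv g₁ g₂ x' := by
  set R := (ℝ ∙ (x - x'))ᗮ.reflection
  have hR : R x = x' := Submodule.reflection_sub h
  calc radialConv g₁ g₂ x = ∫ y, g₁ ‖R y‖ * g₂ ‖x' - R y‖ := by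
        simp only [radialConv, ← hR, ← map_sub, LinearIsometryEquiv.norm_map]
    _ = radialConv g₁ g₂ x' :=
        R.measurePreserving.integral_comp R.toHomeomorph.measurableEmbedding
          (fun y => g₁ ‖y‖ * g₂ ‖x' - y‖)

theorem radialConv_eq_integral_sub_left (g₁ g₂ : ℝ → ℝ) {x x' z : E} (h : x + x' = z) :
    radialConv g₁ g₂ x = ∫ y, g₁ ‖z - y‖ * g₂ ‖x' - y‖ := by
  rw [radialConv, ← integral_sub_left_eq_self _ volume z]
  congr 1 with y
  rw [← h, show x - (x + x' - y) = -(x' - y) by abel, norm_neg]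

theorem antitoneOn_radialConv_smul (h₁mono : AntitoneOn g₁ (Ici 0))
    (h₂mono : AntitoneOn g₂ (Ici 0)) (h₁L2 : MemLp (fun x : E => g₁ ‖x‖) 2 volume)
    (h₂L2 : MemLp (fun x : E => g₂ ‖x‖) 2 volume) (e : E) :
    AntitoneOn (fun r : ℝ => radialConv g₁ g₂ (r • e)) (Ici 0) := by
  intro d₁ hd₁ d₂ _ hd
  set z := (d₁ + d₂) • e with hz
  have hφa : Integrable (fun y => g₁ ‖y‖ * g₂ ‖d₁ • e - y‖) :=
    h₁L2.integrable_mul (h₂L2.comp_sub_left _)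
  have hφb : Integrable (fun y => g₁ ‖y‖ * g₂ ‖d₂ • e - y‖) :=
    h₁L2.integrable_mul (h₂L2.comp_sub_left _)
  have hψa : Integrable (fun y => g₁ ‖z - y‖ * g₂ ‖d₁ • e - y‖) :=
    (h₁L2.comp_sub_left z).integrable_mul (h₂L2.comp_sub_left _)
  have hψb : Integrable (fun y => g₁ ‖z - y‖ * g₂ ‖d₂ • e - y‖) :=
    (h₁L2.comp_sub_left z).integrable_mul (h₂L2.comp_sub_left _)
  have hrearr (y : E) : g₁ ‖y‖ * g₂ ‖d₂ • e - y‖ + g₁ ‖z - y‖ * g₂ ‖d₁ • e - y‖ ≤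
      g₁ ‖y‖ * g₂ ‖d₁ • e - y‖ + g₁ ‖z - y‖ * g₂ ‖d₂ • e - y‖ :=
    h₁mono.mul_add_mul_le_mul_add_mul h₂mono (norm_nonneg _) (norm_nonneg _) (norm_nonneg _)
      (norm_nonneg _) (norm_smul_sub_le_and_or_ge hd₁ hd e y)
  have hrefl₁ : radialConv g₁ g₂ (d₁ • e) = ∫ y, g₁ ‖z - y‖ * g₂ ‖d₂ • e - y‖ :=
    radialConv_eq_integral_sub_left g₁ g₂ (add_smul d₁ d₂ e).symm
  have hrefl₂ : radialConv g₁ g₂ (d₂ • e) = ∫ y, g₁ ‖z - y‖ * g₂ ‖d₁ • e - y‖ :=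
    radialConv_eq_integral_sub_left g₁ g₂ (by rw [hz, add_comm d₁, add_smul])
  have hsum : radialConv g₁ g₂ (d₂ • e) + radialConv g₁ g₂ (d₂ • e) ≤
      radialConv g₁ g₂ (d₁ • e) + radialConv g₁ g₂ (d₁ • e) :=
    calc radialConv g₁ g₂ (d₂ • e) + radialConv g₁ g₂ (d₂ • e)
        = ∫ y, g₁ ‖y‖ * g₂ ‖d₂ • e - y‖ + g₁ ‖z - y‖ * g₂ ‖d₁ • e - y‖ := by
          rw [integral_add hφb hψa, ← hrefl₂]; rfl
      _ ≤ ∫ y, g₁ ‖y‖ * g₂ ‖d₁ • e - y‖ + g₁ ‖z - y‖ * g₂ ‖d₂ • e - y‖ :=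
          integral_mono (hφb.add hψa) (hφa.add hψb) hrearr
      _ = radialConv g₁ g₂ (d₁ • e) + radialConv g₁ g₂ (d₁ • e) := by
          rw [integral_add hφa hψb, ← hrefl₁]; rfl
  change radialConv g₁ g₂ (d₂ • e) ≤ radialConv g₁ g₂ (d₁ • e)
  linarith

theorem exists_antitoneOn_radialConv_eq (h₁mono : AntitoneOn g₁ (Ici 0))
    (h₂mono : AntitoneOn g₂ (Ici 0)) (h₁L2 : MemLp (fun x : E => g₁ ‖x‖) 2 volume)
    (h₂L2 : MemLp (fun x : E => g₂ ‖x‖) 2 volume) :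
    ∃ h : ℝ → ℝ, AntitoneOn h (Ici 0) ∧ ∀ x : E, radialConv g₁ g₂ x = h ‖x‖ := by
  rcases subsingleton_or_nontrivial E with hE | hE
  · exact ⟨fun _ => radialConv g₁ g₂ (0 : E), antitoneOn_const,
      fun x => by rw [Subsingleton.elim x 0]⟩
  · obtain ⟨e, he⟩ := exists_norm_eq E zero_le_one
    refine ⟨fun r => radialConv g₁ g₂ (r • e),
      antitoneOn_radialConv_smul h₁mono h₂mono h₁L2 h₂L2 e, fun x => ?_⟩
    refine radialConv_eq_of_norm_eq g₁ g₂ ?_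
    rw [norm_smul, he, mul_one, norm_norm]

end RadialConv

theorem convolution_radial_antitone_general {k : ℕ}
    (g₁ g₂ : ℝ → ℝ)
    (h₁mono : AntitoneOn g₁ (Set.Ici 0)) (h₂mono : AntitoneOn g₂ (Set.Ici 0))
    (h₁L2 : MemLp (fun x : EuclideanSpace ℝ (Fin k) => g₁ ‖x‖) 2 volume)
    (h₂L2 : MemLp (fun x : EuclideanSpace ℝ (Fin k) => g₂ ‖x‖) 2 volume) :
    ∃ h : ℝ → ℝ, AntitoneOn h (Set.Ici 0) ∧
      ∀ x : EuclideanSpace ℝ (Fin k),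
        (∫ y : EuclideanSpace ℝ (Fin k), g₁ ‖y‖ * g₂ ‖x - y‖ ∂volume) = h ‖x‖ :=
  exists_antitoneOn_radialConv_eq h₁mono h₂mono h₁L2 h₂L2

theorem convolution_radial_antitone {k : ℕ}
    (g₁ g₂ : ℝ → ℝ)
    (h₁nn : ∀ r, 0 ≤ g₁ r) (h₂nn : ∀ r, 0 ≤ g₂ r)
    (h₁mono : AntitoneOn g₁ (Set.Ici 0)) (h₂mono : AntitoneOn g₂ (Set.Ici 0))
    (h₁L2 : MemLp (fun x : EuclideanSpace ℝ (Fin k) => g₁ ‖x‖) 2 volume)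
    (h₂L2 : MemLp (fun x : EuclideanSpace ℝ (Fin k) => g₂ ‖x‖) 2 volume) :
    ∃ h : ℝ → ℝ, AntitoneOn h (Set.Ici 0) ∧
      ∀ x : EuclideanSpace ℝ (Fin k),
        (∫ y : EuclideanSpace ℝ (Fin k), g₁ ‖y‖ * g₂ ‖x - y‖ ∂volume) = h ‖x‖ :=
  convolution_radial_antitone_general g₁ g₂ h₁mono h₂mono h₁L2 h₂L2
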